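/- arXiv:2209.03259 — 2 statements merged into one kernel-verified Lean document; each statement's English description precedes it below -/
import Mathlib

section
/- There exists a universal constant C > 0 (independent of n, k, Z and γ) such that for every n ≥ 4, every real n×k matrix Z of rank r > 0 and every admissible γ, the four-index sum over strictly increasing indices satisfies |∑_{1 ≤ i < j < l < m ≤ n} P^γ_{il} P^γ_{jl} P^γ_{im} P^γ_{jm}| ≤ C·r. -/
open Matrix Finset

/-- The ridge-regularised projection matrix `P^γ = Z (ZᵀZ + γ I)⁻¹ Zᵀ`. -/
noncomputable def ridgeP {n k : ℕ} (Z : Matrix (Fin n) (Fin k) ℝ) (γ : ℝ) :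
    Matrix (Fin n) (Fin n) ℝ :=
  Z * (Zᵀ * Z + γ • (1 : Matrix (Fin k) (Fin k) ℝ))⁻¹ * Zᵀ

/-!
With `B = ZᵀZ + γI` and `P = P^γ` one has `P - P² = γ (ZB⁻¹)(ZB⁻¹)ᵀ ⪰ 0`, so the symmetric
matrix `P` has spectrum in `[0, 1]`. Hence `‖Px‖ ≤ ‖x‖`, `∑ᵢ P_{il}² ≤ P_{ll} ≤ 1` and
`tr P ≤ rank P ≤ r`.

For fixed `i < j` the sum over `j < l < m` is a sum over pairs, so twice the quadruple sum is
`∑_{i<j} (T_{ij}² - W_{ij})` with `T_{ij} = ∑_{l>j} P_{il} P_{jl}` and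
`0 ≤ W_{ij} = ∑_{l>j} P_{il}² P_{jl}²`. Now `T_{·j} = P z_j` for the truncated column
`z_j = (P_{lj} [l > j])_l`, so `∑ᵢ T_{ij}² ≤ ‖z_j‖² ≤ P_{jj}`, while
`∑_{i,j} W_{ij} ≤ ∑_l (∑ᵢ P_{il}²)² ≤ ∑_l P_{ll}`. The sum is therefore at most `tr P ≤ r`,
so `C = 1` works.
-/

section PairSums

variable {ι R : Type*} [Fintype ι] [LinearOrder ι] [CommRing R]

theorem two_mul_sum_pairs_lt (f : ι → R) :
    2 * ∑ l, ∑ m, (if l < m then f l * f m else 0) = (∑ l, f l) ^ 2 - ∑ l, f l ^ 2 := by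
  have trichotomy : ∀ l m, f l * f m = (if l < m then f l * f m else 0)
      + (if m < l then f m * f l else 0) + (if l = m then f l * f m else 0) := by
    intro l m
    rcases lt_trichotomy l m with h | rfl | h
    · simp [h, h.not_gt, h.ne]
    · simp
    · simp [h, h.not_gt, h.ne', mul_comm]
  have hsq : (∑ l, f l) ^ 2 = ∑ l, ∑ m, (if l < m then f l * f m else 0)
      + ∑ l, ∑ m, (if m < l then f m * f l else 0)
      + ∑ l, ∑ m, (if l = m then f l * f m else 0) := by
    simp only [sq, sum_mul_sum, ← sum_add_distrib]
    exact sum_congr rfl fun l _ => sum_congr rfl fun m _ => trichotomy l m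
  rw [hsq, sum_comm (f := fun l m => if m < l then f m * f l else 0)]
  simp only [sum_ite_eq, mem_univ, if_true, sq]
  ring

theorem two_mul_sum_tail_pairs_lt (f : ι → R) (j : ι) :
    2 * ∑ l, ∑ m, (if j < l ∧ l < m then f l * f m else 0)
      = (∑ l, if j < l then f l else 0) ^ 2 - ∑ l, if j < l then f l ^ 2 else 0 := by
  set g : ι → R := fun l => if j < l then f l else 0
  have hmask : ∀ l m, (if j < l ∧ l < m then f l * f m else 0)
      = if l < m then g l * g m else 0 := by
    intro l m
    by_cases hjl : j < l <;> by_cases hlm : l < m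
    · simp [g, hjl, hlm, hjl.trans hlm]
    all_goals simp [g, hjl, hlm]
  have hsq : ∀ l, (if j < l then f l ^ 2 else 0) = g l ^ 2 := fun l => by
    by_cases hjl : j < l <;> simp [g, hjl]
  simp only [hmask, hsq]
  exact two_mul_sum_pairs_lt g

theorem two_mul_sum_quadruple (P : Matrix ι ι R) :
    2 * ∑ i, ∑ j, ∑ l, ∑ m,
        (if i < j ∧ j < l ∧ l < m then P i l * P j l * P i m * P j m else 0)
      = ∑ i, ∑ j, if i < j then
          (∑ l, if j < l then P i l * P j l else 0) ^ 2
            - ∑ l, (if j < l then (P i l * P j l) ^ 2 else 0) else 0 := by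
  rw [mul_sum]
  refine sum_congr rfl fun i _ => ?_
  rw [mul_sum]
  refine sum_congr rfl fun j _ => ?_
  by_cases hij : i < j
  · rw [if_pos hij, ← two_mul_sum_tail_pairs_lt (fun l => P i l * P j l) j]
    congr 1
    refine sum_congr rfl fun l _ => sum_congr rfl fun m _ => ?_
    simp only [hij, true_and]
    split_ifs <;> ring
  · simp [hij]

theorem abs_sum_quadruple_le (P : Matrix ι ι ℝ) :
    |∑ i, ∑ j, ∑ l, ∑ m,
        (if i < j ∧ j < l ∧ l < m then P i l * P j l * P i m * P j m else 0)|
      ≤ (∑ j, ∑ i, (∑ l, if j < l then P i l * P j l else 0) ^ 2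
          + ∑ l, (∑ i, P i l ^ 2) ^ 2) / 2 := by
  set T : ι → ι → ℝ := fun i j => ∑ l, if j < l then P i l * P j l else 0
  set W : ι → ι → ℝ := fun i j => ∑ l, if j < l then (P i l * P j l) ^ 2 else 0
  have hW_nonneg : ∀ i j, 0 ≤ W i j := fun i j =>
    sum_nonneg fun l _ => by split_ifs <;> positivity
  have hW_le : ∀ i j, W i j ≤ ∑ l, P i l ^ 2 * P j l ^ 2 := fun i j =>
    sum_le_sum fun l _ => by split_ifs <;> simp [mul_pow, mul_nonneg, sq_nonneg]
  have hterm : ∀ i j, |if i < j then T i j ^ 2 - W i j else 0|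
      ≤ T i j ^ 2 + ∑ l, P i l ^ 2 * P j l ^ 2 := by
    intro i j
    have := hW_nonneg i j
    have := hW_le i j
    split_ifs
    · rw [abs_le]; constructor <;> nlinarith [sq_nonneg (T i j)]
    · simp only [abs_zero]; positivity
  have hcolumns : ∑ i, ∑ j, ∑ l, P i l ^ 2 * P j l ^ 2 = ∑ l, (∑ i, P i l ^ 2) ^ 2 := by
    calc ∑ i, ∑ j, ∑ l, P i l ^ 2 * P j l ^ 2 = ∑ i, ∑ l, ∑ j, P i l ^ 2 * P j l ^ 2 :=
          sum_congr rfl fun i _ => sum_comm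
      _ = ∑ l, ∑ i, ∑ j, P i l ^ 2 * P j l ^ 2 := sum_comm
      _ = _ := by simp only [sq (∑ i, _), sum_mul_sum]
  calc _ = |2 * ∑ i, ∑ j, ∑ l, ∑ m,
        (if i < j ∧ j < l ∧ l < m then P i l * P j l * P i m * P j m else 0)| / 2 := by
        rw [abs_mul, abs_two]; ring
    _ = |∑ i, ∑ j, if i < j then T i j ^ 2 - W i j else 0| / 2 := by
        rw [two_mul_sum_quadruple]
    _ ≤ (∑ i, ∑ j, (T i j ^ 2 + ∑ l, P i l ^ 2 * P j l ^ 2)) / 2 := by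
        gcongr
        refine (abs_sum_le_sum_abs _ _).trans (sum_le_sum fun i _ => ?_)
        exact (abs_sum_le_sum_abs _ _).trans (sum_le_sum fun j _ => hterm i j)
    _ = _ := by
        rw [← hcolumns, sum_comm (f := fun j i => T i j ^ 2)]
        simp only [sum_add_distrib]

end PairSums

namespace Matrix.IsHermitian

variable {n : Type*} [Fintype n] {P : Matrix n n ℝ}

theorem dotProduct_mulVec_self_le (hP : P.IsHermitian) (hPP : (P - P * P).PosSemidef)
    (x : n → ℝ) : (P *ᵥ x) ⬝ᵥ (P *ᵥ x) ≤ x ⬝ᵥ (P *ᵥ x) := by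
  have hPt : Pᵀ = P := (conjTranspose_eq_transpose_of_trivial P).symm.trans hP
  have hsymm : x ⬝ᵥ P *ᵥ (P *ᵥ x) = (P *ᵥ x) ⬝ᵥ (P *ᵥ x) := by
    rw [dotProduct_mulVec, ← mulVec_transpose, hPt]
  have h := hPP.dotProduct_mulVec_nonneg x
  rw [star_trivial, sub_mulVec, dotProduct_sub, ← mulVec_mulVec, hsymm] at h
  linarith

theorem dotProduct_mulVec_le_dotProduct_self (hP : P.IsHermitian)
    (hPP : (P - P * P).PosSemidef) (x : n → ℝ) : (P *ᵥ x) ⬝ᵥ (P *ᵥ x) ≤ x ⬝ᵥ x := by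
  have h := hP.dotProduct_mulVec_self_le hPP x
  have hdiff := dotProduct_star_self_nonneg (x - P *ᵥ x)
  rw [star_trivial, sub_dotProduct, dotProduct_sub, dotProduct_sub,
    dotProduct_comm (P *ᵥ x) x] at hdiff
  linarith

theorem sum_sq_le_diag (hP : P.IsHermitian) (hPP : (P - P * P).PosSemidef)
    (j : n) : ∑ i, P i j ^ 2 ≤ P j j := by
  classical
  have h := hP.dotProduct_mulVec_self_le hPP (Pi.single j 1)
  rw [mulVec_single_one, single_one_dotProduct] at h
  simpa [dotProduct, sq] using h

theorem diag_le_one (hP : P.IsHermitian) (hPP : (P - P * P).PosSemidef)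
    (j : n) : P j j ≤ 1 := by
  have hcol := hP.sum_sq_le_diag hPP j
  have hdiag : P j j ^ 2 ≤ ∑ i, P i j ^ 2 :=
    single_le_sum (f := fun i => P i j ^ 2) (fun i _ => sq_nonneg _) (mem_univ j)
  nlinarith

theorem eigenvalues_mem_Icc [DecidableEq n] (hP : P.IsHermitian) (hPP : (P - P * P).PosSemidef)
    (i : n) : hP.eigenvalues i ∈ Set.Icc 0 1 := by
  set v : n → ℝ := ⇑(hP.eigenvectorBasis i)
  have hv : P *ᵥ v = hP.eigenvalues i • v := hP.mulVec_eigenvectorBasis i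
  have hv_pos : 0 < v ⬝ᵥ v := by
    have hv_ne : v ≠ 0 := fun h =>
      hP.eigenvectorBasis.orthonormal.ne_zero i (by ext l; exact congrFun h l)
    simpa using dotProduct_star_self_pos_iff.mpr hv_ne
  have h := hP.dotProduct_mulVec_self_le hPP v
  simp only [hv, smul_dotProduct, dotProduct_smul, smul_eq_mul] at h
  have hμ : 0 ≤ hP.eigenvalues i * (1 - hP.eigenvalues i) :=
    nonneg_of_mul_nonneg_left (by nlinarith) hv_pos
  constructor <;> nlinarith

theorem trace_le_rank (hP : P.IsHermitian) (hPP : (P - P * P).PosSemidef) :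
    P.trace ≤ P.rank := by
  classical
  rw [hP.trace_eq_sum_eigenvalues, hP.rank_eq_card_non_zero_eigs, Fintype.card_subtype,
    ← sum_boole]
  refine sum_le_sum fun i _ => ?_
  have := hP.eigenvalues_mem_Icc hPP i
  split_ifs with h
  · simpa using this.2
  · exact (not_not.mp h).le

theorem sum_sq_sum_sq_le_trace (hP : P.IsHermitian)
    (hPP : (P - P * P).PosSemidef) : ∑ l, (∑ i, P i l ^ 2) ^ 2 ≤ P.trace := by
  refine sum_le_sum fun l _ => show _ ≤ P l l from ?_
  have hcol := hP.sum_sq_le_diag hPP l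
  have hle_one := hP.diag_le_one hPP l
  have hnonneg : 0 ≤ ∑ i, P i l ^ 2 := sum_nonneg fun i _ => sq_nonneg _
  nlinarith

theorem sum_sq_tail_le_trace [LinearOrder n] (hP : P.IsHermitian)
    (hPP : (P - P * P).PosSemidef) :
    ∑ j, ∑ i, (∑ l, if j < l then P i l * P j l else 0) ^ 2 ≤ P.trace := by
  refine sum_le_sum fun j _ => ?_
  set z : n → ℝ := fun l => if j < l then P l j else 0
  have htail : ∀ i, (∑ l, if j < l then P i l * P j l else 0) = (P *ᵥ z) i := fun i =>
    sum_congr rfl fun l _ => by by_cases hjl : j < l <;> simp [z, hjl, ← hP.apply l j]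
  calc ∑ i, (∑ l, if j < l then P i l * P j l else 0) ^ 2 = (P *ᵥ z) ⬝ᵥ (P *ᵥ z) := by
        simp only [htail, dotProduct, sq]
    _ ≤ z ⬝ᵥ z := hP.dotProduct_mulVec_le_dotProduct_self hPP z
    _ ≤ ∑ l, P l j ^ 2 := sum_le_sum fun l _ => by
        by_cases hjl : j < l <;> simp [z, hjl, sq, mul_self_nonneg]
    _ ≤ P j j := hP.sum_sq_le_diag hPP j

end Matrix.IsHermitian

section Ridge

variable {n k : ℕ} {Z : Matrix (Fin n) (Fin k) ℝ} {γ : ℝ}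

theorem posDef_transpose_mul_self_add_smul_one (hγ : 0 ≤ γ) (hγk : Z.rank < k → 0 < γ) :
    (Zᵀ * Z + γ • (1 : Matrix (Fin k) (Fin k) ℝ)).PosDef := by
  have hgram : (Zᵀ * Z).PosSemidef := by simpa using posSemidef_conjTranspose_mul_self Z
  rcases hγ.lt_or_eq with hγ_pos | rfl
  · exact PosDef.posSemidef_add hgram (PosDef.one.smul hγ_pos)
  · have hrank : Z.rank = k := (rank_le_width Z).antisymm (not_lt.mp fun h => (hγk h).false)
    have hinj : Function.Injective Z.mulVec := by
      rw [mulVec_injective_iff, linearIndependent_iff_card_eq_finrank_span, Fintype.card_fin,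
        Set.finrank, ← rank_eq_finrank_span_cols, hrank]
    simpa using PosDef.conjTranspose_mul_self Z hinj

theorem isSymm_transpose_mul_self_add_smul_one :
    (Zᵀ * Z + γ • (1 : Matrix (Fin k) (Fin k) ℝ)).IsSymm := by
  simp [IsSymm, transpose_add, transpose_mul]

variable (Z γ) in
theorem ridgeP_isHermitian : (ridgeP Z γ).IsHermitian := by
  rw [IsHermitian, conjTranspose_eq_transpose_of_trivial, ridgeP, transpose_mul, transpose_mul,
    transpose_transpose, transpose_nonsing_inv, isSymm_transpose_mul_self_add_smul_one.eq,
    Matrix.mul_assoc]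

theorem ridgeP_sub_mul_self (hB : IsUnit (Zᵀ * Z + γ • (1 : Matrix (Fin k) (Fin k) ℝ)).det) :
    ridgeP Z γ - ridgeP Z γ * ridgeP Z γ
      = γ • (Z * (Zᵀ * Z + γ • 1)⁻¹ * (Z * (Zᵀ * Z + γ • 1)⁻¹)ᵀ) := by
  set B := Zᵀ * Z + γ • (1 : Matrix (Fin k) (Fin k) ℝ) with hB_def
  have hgram : Zᵀ * Z = B - γ • 1 := by rw [hB_def, add_sub_cancel_right]
  have hBt : B⁻¹ᵀ = B⁻¹ := by
    rw [transpose_nonsing_inv, isSymm_transpose_mul_self_add_smul_one.eq]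
  calc ridgeP Z γ - ridgeP Z γ * ridgeP Z γ
      = Z * B⁻¹ * Zᵀ - Z * B⁻¹ * (Zᵀ * Z) * B⁻¹ * Zᵀ := by
        simp only [ridgeP, ← hB_def, Matrix.mul_assoc]
    _ = Z * B⁻¹ * Zᵀ - Z * (B⁻¹ * B) * B⁻¹ * Zᵀ + γ • (Z * B⁻¹ * B⁻¹ * Zᵀ) := by
        rw [hgram]
        simp only [Matrix.mul_sub, Matrix.sub_mul, Matrix.mul_smul, Matrix.smul_mul,
          Matrix.mul_one, Matrix.mul_assoc]
        abel
    _ = γ • (Z * B⁻¹ * (Z * B⁻¹)ᵀ) := by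
        rw [nonsing_inv_mul B hB, Matrix.mul_one, sub_self, zero_add, transpose_mul, hBt,
          Matrix.mul_assoc]

theorem posSemidef_ridgeP_sub_mul_self (hγ : 0 ≤ γ) (hγk : Z.rank < k → 0 < γ) :
    (ridgeP Z γ - ridgeP Z γ * ridgeP Z γ).PosSemidef := by
  have hB := (isUnit_iff_isUnit_det _).mp (posDef_transpose_mul_self_add_smul_one hγ hγk).isUnit
  rw [ridgeP_sub_mul_self hB]
  have hN := (posSemidef_self_mul_conjTranspose (Z * (Zᵀ * Z + γ • 1)⁻¹)).smul hγ
  rwa [conjTranspose_eq_transpose_of_trivial] at hN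

theorem rank_ridgeP_le : (ridgeP Z γ).rank ≤ Z.rank :=
  (rank_mul_le_left _ _).trans (rank_mul_le_left _ _)

end Ridge

/-- There is a universal constant `C > 0` such that for every `n ≥ 4`, every real `n×k`
matrix `Z` of positive rank `r` and every admissible ridge penalty `γ`,
`|∑_{i<j<l<m} P^γ_{il} P^γ_{jl} P^γ_{im} P^γ_{jm}| ≤ C·r`. -/
theorem ridgeP_quadruple_sum_le :
    ∃ C : ℝ, 0 < C ∧
      ∀ (n k : ℕ), 4 ≤ n → 0 < k →
        ∀ (Z : Matrix (Fin n) (Fin k) ℝ), 0 < Z.rank →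
          ∀ γ : ℝ, 0 ≤ γ → (Z.rank < k → 0 < γ) →
            |∑ i : Fin n, ∑ j : Fin n, ∑ l : Fin n, ∑ m : Fin n,
                if i < j ∧ j < l ∧ l < m then
                  ridgeP Z γ i l * ridgeP Z γ j l * ridgeP Z γ i m * ridgeP Z γ j m
                else 0| ≤ C * (Z.rank : ℝ) := by
  refine ⟨1, one_pos, fun n k _ _ Z _ γ hγ hγk => ?_⟩
  set P := ridgeP Z γ
  have hP : P.IsHermitian := ridgeP_isHermitian Z γ
  have hPP : (P - P * P).PosSemidef := posSemidef_ridgeP_sub_mul_self hγ hγk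
  calc _ ≤ (∑ j, ∑ i, (∑ l, if j < l then P i l * P j l else 0) ^ 2
          + ∑ l, (∑ i, P i l ^ 2) ^ 2) / 2 := abs_sum_quadruple_le P
    _ ≤ (P.trace + P.trace) / 2 := by
        gcongr
        exacts [hP.sum_sq_tail_le_trace hPP, hP.sum_sq_sum_sq_le_trace hPP]
    _ = P.trace := by ring
    _ ≤ P.rank := hP.trace_le_rank hPP
    _ ≤ 1 * Z.rank := by rw [one_mul]; exact_mod_cast rank_ridgeP_le
end

section
/- The diagonal entries of the ridge-regularised projection matrix are nonincreasing in the penalty: for any admissible 0 ≤ γ₁ ≤ γ₂ and every h ∈ {1,…,n}, 0 ≤ P^{γ₂}_{hh} ≤ P^{γ₁}_{hh}; in particular, P^γ_{hh} ≤ P_{hh} for all γ ≥ 0 when ZᵀZ is invertible and P := Z(ZᵀZ)^{-1}Zᵀ. -/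
/-!
In the Loewner order, `γ ↦ ZᵀZ + γ I` is monotone, matrix inversion is antitone on positive
definite matrices, and conjugation `M ↦ Z M Zᵀ` is monotone; hence `γ ↦ P^γ` is antitone, and so
are its diagonal entries. Antitonicity of the inverse comes from the Schur complements of the
block matrix `[B, I; I, A⁻¹]`: with respect to `A⁻¹` it is `B - A`, with respect to `B` it is
`A⁻¹ - B⁻¹`, and both are positive semidefinite together.
-/

open Matrix

open scoped MatrixOrder ComplexOrder

namespace Matrix

variable {𝕜 : Type*} [RCLike 𝕜] {m n : Type*}

theorem diag_le_diag_of_le {A B : Matrix n n 𝕜} (h : A ≤ B) (i : n) : A i i ≤ B i i :=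
  sub_nonneg.mp (le_iff.mp h).diag_nonneg

theorem mul_mul_conjTranspose_le_mul_mul_conjTranspose [Fintype m] [Fintype n]
    {A B : Matrix n n 𝕜} (h : A ≤ B) (Z : Matrix m n 𝕜) : Z * A * Zᴴ ≤ Z * B * Zᴴ := by
  rw [le_iff, ← Matrix.sub_mul, ← Matrix.mul_sub]
  exact (le_iff.mp h).mul_mul_conjTranspose_same Z

theorem add_smul_one_le_add_smul_one [DecidableEq n] (A : Matrix n n 𝕜) {a b : ℝ} (h : a ≤ b) :
    A + a • (1 : Matrix n n 𝕜) ≤ A + b • 1 := by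
  rw [le_iff, add_sub_add_left_eq_sub, ← sub_smul]
  exact PosSemidef.one.smul (sub_nonneg.mpr h)

theorem PosDef.inv_le_inv [Fintype n] [DecidableEq n] {A B : Matrix n n 𝕜} (hA : A.PosDef)
    (hAB : A ≤ B) : B⁻¹ ≤ A⁻¹ := by
  have hB : B.PosDef := by simpa using hA.add_posSemidef (le_iff.mp hAB)
  have := hA.isUnit.invertible
  have := hB.isUnit.invertible
  have hblock : (fromBlocks B 1 1ᴴ A⁻¹).PosSemidef := by
    rw [PosDef.fromBlocks₂₂ _ _ hA.inv, inv_inv_of_invertible]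
    simpa using le_iff.mp hAB
  rw [le_iff]
  simpa using (PosDef.fromBlocks₁₁ _ _ hB).mp hblock

theorem mulVec_injective_of_rank_eq_card {K : Type*} [Field K] [Fintype m] [Fintype n]
    {A : Matrix m n K} (h : A.rank = Fintype.card n) : Function.Injective A.mulVec := by
  have hsum := LinearMap.finrank_range_add_finrank_ker A.mulVecLin
  rw [← rank, h, Module.finrank_fintype_fun_eq_card, add_eq_left,
    Submodule.finrank_eq_zero, LinearMap.ker_eq_bot] at hsum
  exact hsum

theorem posSemidef_transpose_mul_self_add_smul_one [Fintype m] [Fintype n] [DecidableEq n]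
    (Z : Matrix m n ℝ) {γ : ℝ} (hγ : 0 ≤ γ) : (Zᵀ * Z + γ • (1 : Matrix n n ℝ)).PosSemidef :=
  (posSemidef_conjTranspose_mul_self Z).add (PosSemidef.one.smul hγ)

theorem posDef_transpose_mul_self_add_smul_one [Fintype m] [Fintype n] [DecidableEq n]
    (Z : Matrix m n ℝ) {γ : ℝ} (hγ : 0 ≤ γ) (hrank : Z.rank < Fintype.card n → 0 < γ) :
    (Zᵀ * Z + γ • (1 : Matrix n n ℝ)).PosDef := by
  rcases hγ.lt_or_eq with hpos | rfl
  · exact PosDef.posSemidef_add (posSemidef_conjTranspose_mul_self Z) (PosDef.one.smul hpos)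
  · have hfull : Z.rank = Fintype.card n :=
      Z.rank_le_card_width.eq_or_lt.resolve_right fun hlt => (hrank hlt).false
    simpa using PosDef.conjTranspose_mul_self Z (mulVec_injective_of_rank_eq_card hfull)

end Matrix

section Ridge

variable {n k : ℕ}

theorem ridgeP_posSemidef (Z : Matrix (Fin n) (Fin k) ℝ) {γ : ℝ} (hγ : 0 ≤ γ) :
    (ridgeP Z γ).PosSemidef := by
  simpa [ridgeP] using
    (posSemidef_transpose_mul_self_add_smul_one Z hγ).inv.mul_mul_conjTranspose_same Z

theorem ridgeP_le_ridgeP {Z : Matrix (Fin n) (Fin k) ℝ} {γ₁ γ₂ : ℝ}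
    (hpos : (Zᵀ * Z + γ₁ • (1 : Matrix (Fin k) (Fin k) ℝ)).PosDef) (hγ : γ₁ ≤ γ₂) :
    ridgeP Z γ₂ ≤ ridgeP Z γ₁ := by
  simpa [ridgeP] using mul_mul_conjTranspose_le_mul_mul_conjTranspose
    (hpos.inv_le_inv (add_smul_one_le_add_smul_one _ hγ)) Z

end Ridge

theorem ridgeP_diag_antitone_general
    {n k : ℕ}
    (Z : Matrix (Fin n) (Fin k) ℝ) :
    (∀ γ₁ γ₂ : ℝ, 0 ≤ γ₁ →
      (Z.rank < k → 0 < γ₁) → (Z.rank < k → 0 < γ₂) → γ₁ ≤ γ₂ →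
      ∀ h : Fin n,
        0 ≤ ridgeP Z γ₂ h h ∧ ridgeP Z γ₂ h h ≤ ridgeP Z γ₁ h h) ∧
    (IsUnit (Zᵀ * Z).det →
      ∀ γ : ℝ, 0 ≤ γ → ∀ h : Fin n,
        ridgeP Z γ h h ≤ (Z * (Zᵀ * Z)⁻¹ * Zᵀ) h h) := by
  refine ⟨fun γ₁ γ₂ hγ₁ hrank₁ _ hγ h => ⟨?_, ?_⟩, fun hdet γ hγ h => ?_⟩
  · exact (ridgeP_posSemidef Z (hγ₁.trans hγ)).diag_nonneg
  · have hpos := posDef_transpose_mul_self_add_smul_one Z hγ₁ (by simpa using hrank₁)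
    exact diag_le_diag_of_le (ridgeP_le_ridgeP hpos hγ) h
  · have hpos : (Zᵀ * Z).PosDef := (posSemidef_conjTranspose_mul_self Z).posDef_iff_isUnit.mpr
      ((isUnit_iff_isUnit_det _).mpr hdet)
    have hP₀ : ridgeP Z 0 = Z * (Zᵀ * Z)⁻¹ * Zᵀ := by simp [ridgeP]
    exact hP₀ ▸ diag_le_diag_of_le (ridgeP_le_ridgeP (by simpa using hpos) hγ) h

/-- The diagonal entries of the ridge-regularised projection matrix are nonnegative and
nonincreasing in the penalty: for admissible `0 ≤ γ₁ ≤ γ₂` and every `h`,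
`0 ≤ P^{γ₂}_{hh} ≤ P^{γ₁}_{hh}`; in particular `P^γ_{hh} ≤ P_{hh}` for all `γ ≥ 0`
when `ZᵀZ` is invertible and `P = Z(ZᵀZ)⁻¹Zᵀ`. -/
theorem ridgeP_diag_antitone
    {n k : ℕ} (hn : 0 < n) (hk : 0 < k)
    (Z : Matrix (Fin n) (Fin k) ℝ) (hr : 0 < Z.rank) :
    (∀ γ₁ γ₂ : ℝ, 0 ≤ γ₁ →
      (Z.rank < k → 0 < γ₁) → (Z.rank < k → 0 < γ₂) → γ₁ ≤ γ₂ →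
      ∀ h : Fin n,
        0 ≤ ridgeP Z γ₂ h h ∧ ridgeP Z γ₂ h h ≤ ridgeP Z γ₁ h h) ∧
    (IsUnit (Zᵀ * Z).det →
      ∀ γ : ℝ, 0 ≤ γ → ∀ h : Fin n,
        ridgeP Z γ h h ≤ (Z * (Zᵀ * Z)⁻¹ * Zᵀ) h h) :=
  ridgeP_diag_antitone_general Z
end
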